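/- Let c = c_{p,q}, let M be a weak L(c,0)-module, let u ∈ M, and let k be a positive integer such that L(k)u ≠ 0 and L(n)u = 0 for all n > k. Set ω^{(n)} = (1/n!)L(−1)ⁿω. Then for any nonnegative integers n₁, …, n_r, the lowest power of z occurring in Y_M(ω^{(n₁)}_{−1} ⋯ ω^{(n_r)}_{−1}𝟏, z)u is −r(k+2) − n₁ − ⋯ − n_r, and its coefficient equals ∏_{i=1}^r C(−k−2, n_i) · L(k)^r u, where C(·,·) denotes the binomial coefficient. -/

import Mathlib

noncomputable section

open scoped BigOperators

/-- A vertex operator algebra over `ℂ` (axioms as in [FLM]), described in terms of the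
component operators `aₙ` of the vertex operators `Y(a,z) = ∑_{n ∈ ℤ} aₙ z^{-n-1}`;
the Jacobi identity is imposed in its equivalent component (Borcherds identity) form. -/
structure VOA where
  carrier : Type
  [addCommGroup : AddCommGroup carrier]
  [isModule : Module ℂ carrier]
  /-- `Y a n` is the component operator `aₙ` of the vertex operator `Y(a,z)`. -/
  Y : carrier →ₗ[ℂ] ℤ → Module.End ℂ carrier
  /-- the vacuum vector `𝟏` -/
  one : carrier
  /-- the Virasoro element `ω` -/
  omega : carrier
  /-- the rank (central charge) of the algebra -/
  rank : ℂ
  /-- the grading `V = ⊕_{n ∈ ℤ} V_n` -/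
  grading : ℤ → Submodule ℂ carrier
  grading_indep : iSupIndep grading
  grading_sup : (⨆ n, grading n) = ⊤
  grading_fd : ∀ n, FiniteDimensional ℂ (grading n)
  grading_bdd : ∃ N : ℤ, ∀ n : ℤ, n < N → grading n = ⊥
  one_mem : one ∈ grading 0
  omega_mem : omega ∈ grading 2
  mode_grading : ∀ (r s m : ℤ) (a v : carrier),
    a ∈ grading r → v ∈ grading s → Y a m v ∈ grading (r + s - m - 1)
  trunc : ∀ a v : carrier, ∃ N : ℤ, ∀ n : ℤ, N ≤ n → Y a n v = 0
  vacuum : ∀ n : ℤ, Y one n = if n = -1 then 1 else 0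
  creation : ∀ a : carrier, Y a (-1) one = a
  creation_nonneg : ∀ (a : carrier) (n : ℤ), 0 ≤ n → Y a n one = 0
  jacobi : ∀ (a b v : carrier) (p q r : ℤ),
    (∑ᶠ i : ℕ, ((Ring.choose p i : ℤ) : ℂ) • Y (Y a (r + (i : ℤ)) b) (p + q - (i : ℤ)) v) =
      (∑ᶠ i : ℕ, ((-1 : ℂ) ^ i * ((Ring.choose r i : ℤ) : ℂ)) •
        (Y a (p + r - (i : ℤ)) (Y b (q + (i : ℤ)) v)
          - ((-1 : ℂ) ^ r) • Y b (q + r - (i : ℤ)) (Y a (p + (i : ℤ)) v)))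
  L0_grading : ∀ (n : ℤ) (v : carrier), v ∈ grading n → Y omega 1 v = (n : ℂ) • v
  Lminus1_deriv : ∀ (a : carrier) (n : ℤ), Y (Y omega 0 a) n = (-n : ℂ) • Y a (n - 1)
  virasoro : ∀ m n : ℤ,
    Y omega (m + 1) * Y omega (n + 1) - Y omega (n + 1) * Y omega (m + 1) =
      ((m : ℂ) - (n : ℂ)) • Y omega (m + n + 1)
        + (if m + n = 0 then ((m : ℂ) ^ 3 - (m : ℂ)) / 12 * rank else 0) • 1

attribute [instance] VOA.addCommGroup VOA.isModule

/-- A weak module for a vertex operator algebra `V`: a vector space `M` with a linear map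
`v ↦ Y_M(v,z) = ∑ vₙ z^{-n-1}` satisfying only the truncation condition, the vacuum
condition `Y_M(𝟏,z) = id`, and the Jacobi identity (in component form). -/
structure WeakModule (V : VOA) where
  carrier : Type
  [addCommGroup : AddCommGroup carrier]
  [isModule : Module ℂ carrier]
  /-- `act a n` is the component operator `aₙ` of `Y_M(a,z)`. -/
  act : V.carrier →ₗ[ℂ] ℤ → Module.End ℂ carrier
  trunc : ∀ (a : V.carrier) (w : carrier), ∃ N : ℤ, ∀ n : ℤ, N ≤ n → act a n w = 0
  vacuum : ∀ n : ℤ, act V.one n = if n = -1 then 1 else 0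
  jacobi : ∀ (a b : V.carrier) (w : carrier) (p q r : ℤ),
    (∑ᶠ i : ℕ, ((Ring.choose p i : ℤ) : ℂ) • act (V.Y a (r + (i : ℤ)) b) (p + q - (i : ℤ)) w) =
      (∑ᶠ i : ℕ, ((-1 : ℂ) ^ i * ((Ring.choose r i : ℤ) : ℂ)) •
        (act a (p + r - (i : ℤ)) (act b (q + (i : ℤ)) w)
          - ((-1 : ℂ) ^ r) • act b (q + r - (i : ℤ)) (act a (p + (i : ℤ)) w)))

attribute [instance] WeakModule.addCommGroup WeakModule.isModule

/-- The Virasoro operators `L(n) = ω_{n+1}` on a weak module. -/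
def WeakModule.L {V : VOA} (M : WeakModule V) (n : ℤ) : Module.End ℂ M.carrier :=
  M.act V.omega (n + 1)

/-- The central charge `c_{p,q} = 1 - 6(p-q)²/(pq)` of the discrete series of the
Virasoro algebra. -/
def cpq (p q : ℕ) : ℂ := 1 - 6 * ((p : ℂ) - (q : ℂ)) ^ 2 / ((p : ℂ) * (q : ℂ))

/-- The vertex operator algebra `L(c_{p,q}, 0)` associated with the irreducible lowest
weight module for the Virasoro algebra with central charge `c_{p,q}` and lowest weight
`0`: a vertex operator algebra of rank `c_{p,q}` which is irreducible under the action of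
the Virasoro algebra, i.e. under the component operators `L(n)` of `Y(ω,z)`.  (The vacuum
is then a lowest weight vector of lowest weight `0`, by the vacuum axioms.) -/
structure VirasoroVOA (p q : ℕ) where
  V : VOA
  rank_eq : V.rank = cpq p q
  irreducible : ∀ U : Submodule ℂ V.carrier,
    (∀ (n : ℤ) (w : V.carrier), w ∈ U → V.Y V.omega n w ∈ U) → U = ⊥ ∨ U = ⊤

/-- The vector `ω^{(n₁)}_{-1} ⋯ ω^{(n_r)}_{-1} 𝟏 ∈ V`, where `ω^{(n)} = (1/n!) L(-1)ⁿ ω`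
(and `L(-1) = ω₀`). -/
def omegaWord (V : VOA) : List ℕ → V.carrier
  | [] => V.one
  | n :: ns =>
    V.Y ((n.factorial : ℂ)⁻¹ • (((V.Y V.omega 0) ^ n) V.omega)) (-1) (omegaWord V ns)

/-!
By the iterate formula (the Jacobi identity at `p = 0`, `r = -1`),
`(ω^{(n)}_{-1} v)_s u = ∑ᵢ (ω^{(n)}_{-1-i} v_{s+i} u + v_{s-1-i} ω^{(n)}_i u)`, and the
`L(-1)`-derivative property gives `ω^{(n)}_i = (-1)ⁿ C(i,n) L(i-n-1)`.  Call `u` admissible if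
`L(n)u = 0` for all `n > k`; by the Virasoro relations `L(j)u` is again admissible for `j ≥ 0`.
Induct on the length of the word `v`, of degree `D`, for all admissible `u` at once.  For
`s ≥ D + k + n + 1` the terms with `i < n` vanish as `C(i,n) = 0`, the term `i = n` because
`[v_s, L(-1)] = s v_{s-1}` and `k > 0`, the terms with `n < i < k + n + 1` by induction applied to
the admissible `L(i-n-1)u`, and those with `i > k + n + 1` by admissibility.  Only `i = k + n + 1`
survives, contributing `(-1)ⁿ C(k+n+1,n) v_{s-k-n-2} L(k)u = C(-k-2,n) v_{s-k-n-2} L(k)u`.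
-/

lemma finsum_choose_zero_smul {E : Type*} [AddCommGroup E] [Module ℂ E] (f : ℕ → E) :
    ∑ᶠ i : ℕ, ((Ring.choose (0 : ℤ) i : ℤ) : ℂ) • f i = f 0 := by
  rw [finsum_eq_single _ 0 fun i hi => by simp [Ring.choose_zero_pos ℤ (Nat.pos_of_ne_zero hi)]]
  simp

namespace VOA

variable (V : VOA)

def omegaDiv (n : ℕ) : V.carrier :=
  (n.factorial : ℂ)⁻¹ • ((V.Y V.omega 0 ^ n) V.omega)

lemma omegaWord_cons (n : ℕ) (ns : List ℕ) :
    omegaWord V (n :: ns) = V.Y (V.omegaDiv n) (-1) (omegaWord V ns) :=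
  rfl

lemma Y_neg_two_one (a : V.carrier) : V.Y a (-2) V.one = V.Y V.omega 0 a := by
  have h := congrArg (· V.one) (V.Lminus1_deriv a (-1))
  simp only [LinearMap.smul_apply, V.creation] at h
  norm_num [h]

lemma Y_omega_one_omega : V.Y V.omega 1 V.omega = (2 : ℂ) • V.omega := by
  simpa using V.L0_grading 2 V.omega V.omega_mem

lemma Y_omega_omega_of_two_le {i : ℤ} (hi : 2 ≤ i) :
    V.Y V.omega i V.omega = (if i = 3 then V.rank / 2 else 0) • V.one := by
  have h := congrArg (· V.one) (V.virasoro (i - 1) (-2))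
  simp only [LinearMap.sub_apply, LinearMap.add_apply, LinearMap.smul_apply,
    Module.End.mul_apply, Module.End.one_apply, sub_add_cancel] at h
  rw [show (-2 : ℤ) + 1 = -1 by norm_num, show i - 1 + -2 + 1 = i - 2 by ring, V.creation,
    V.creation_nonneg V.omega i (by omega), V.creation_nonneg V.omega (i - 2) (by omega),
    map_zero, sub_zero, smul_zero, zero_add] at h
  rw [h]
  congr 1
  by_cases h3 : i = 3
  · subst h3
    rw [if_pos rfl, if_pos (by norm_num)]
    push_cast
    ring
  · simp [h3, show i - 1 + -2 ≠ 0 by omega]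

end VOA

namespace WeakModule

variable {V : VOA} (M : WeakModule V)

lemma act_one_apply (m : ℤ) (w : M.carrier) :
    M.act V.one m w = if m = -1 then w else 0 := by
  rw [M.vacuum m]
  split_ifs <;> rfl

lemma act_smul_apply (c : ℂ) (a : V.carrier) (m : ℤ) (w : M.carrier) :
    M.act (c • a) m w = c • M.act a m w := by
  rw [map_smul]
  rfl

lemma act_commutator (a b : V.carrier) (p q : ℤ) (w : M.carrier) :
    M.act a p (M.act b q w) - M.act b q (M.act a p w) =
      ∑ᶠ i : ℕ, ((Ring.choose p i : ℤ) : ℂ) • M.act (V.Y a i b) (p + q - i) w := by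
  have J := M.jacobi a b w p q 0
  simp only [zero_add, add_zero, mul_comm ((-1 : ℂ) ^ _), mul_smul] at J
  rw [J, finsum_choose_zero_smul]
  simp

lemma act_Y_neg_one_apply (a b : V.carrier) (s : ℤ) (w : M.carrier) :
    M.act (V.Y a (-1) b) s w =
      ∑ᶠ i : ℕ, (M.act a (-1 - i) (M.act b (s + i) w) + M.act b (s - 1 - i) (M.act a i w)) := by
  have J := M.jacobi a b w 0 s (-1)
  rw [finsum_choose_zero_smul] at J
  simp only [Nat.cast_zero, add_zero, zero_add, sub_zero] at J
  rw [J]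
  refine finsum_congr fun i => ?_
  have hi : (-1 : ℂ) ^ i * ((Ring.choose (-1 : ℤ) i : ℤ) : ℂ) = 1 := by
    rw [Ring.choose_neg, add_sub_cancel_left, Ring.choose_natCast, Nat.choose_self,
      Units.smul_def, Int.coe_negOnePow_natCast, smul_eq_mul]
    push_cast
    rw [mul_one, ← mul_pow]
    norm_num
  rw [hi, one_smul, zpow_neg_one, show s + -1 - (i : ℤ) = s - 1 - i by ring]
  simp

lemma act_Lminus1 (a : V.carrier) (m : ℤ) (w : M.carrier) :
    M.act (V.Y V.omega 0 a) m w = (-m : ℂ) • M.act a (m - 1) w := by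
  have J := M.jacobi a V.one w (m + 1) (-1) (-2)
  rw [finsum_eq_sum_of_support_subset (s := {0, 1}) _ fun i hi => ?supp,
    Finset.sum_pair zero_ne_one, finsum_eq_single _ 0 fun i hi => ?single] at J
  case supp =>
    by_contra h
    simp only [Finset.coe_insert, Finset.coe_singleton, Set.mem_insert_iff,
      Set.mem_singleton_iff, not_or] at h
    apply hi
    rw [V.creation_nonneg a _ (by omega)]
    simp
  case single =>
    simp [act_one_apply, show -1 + (i : ℤ) ≠ -1 by omega, show -3 - (i : ℤ) ≠ -1 by omega]
  have key : M.act (V.Y V.omega 0 a) m w + ((m : ℂ) + 1) • M.act a (m - 1) w =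
      M.act a (m - 1) w := by
    simpa [act_one_apply, V.Y_neg_two_one, V.creation, show m + 1 + -2 = m - 1 by ring] using J
  rw [eq_sub_of_add_eq key]
  module

lemma act_apply_L_neg_one (b : V.carrier) (t : ℤ) (x : M.carrier) :
    M.act b t (M.L (-1) x) = M.L (-1) (M.act b t x) + (t : ℂ) • M.act b (t - 1) x := by
  have h := M.act_commutator V.omega b 0 t x
  rw [finsum_choose_zero_smul] at h
  simp only [L, Nat.cast_zero, zero_add, sub_zero, act_Lminus1] at h ⊢
  rw [neg_add_cancel, ← sub_eq_iff_eq_add', ← neg_sub, h, neg_smul, neg_neg]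

lemma L_commutator (m j : ℤ) (h : m + j ≠ 0) (w : M.carrier) :
    M.L m (M.L j w) - M.L j (M.L m w) = ((m : ℂ) - j) • M.L (m + j) w := by
  rw [L, L, act_commutator, finsum_eq_sum_of_support_subset (s := {0, 1}) _ fun i hi => ?supp,
    Finset.sum_pair zero_ne_one]
  case supp =>
    by_contra hi01
    simp only [Finset.coe_insert, Finset.coe_singleton, Set.mem_insert_iff,
      Set.mem_singleton_iff, not_or] at hi01
    apply hi
    rw [V.Y_omega_omega_of_two_le (by omega), act_smul_apply, act_one_apply]
    split_ifs <;> first | omega | simp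
  simp only [Nat.cast_zero, Nat.cast_one, Ring.choose_zero_right, Ring.choose_one_right,
    act_Lminus1, V.Y_omega_one_omega, act_smul_apply, L]
  push_cast
  rw [show m + 1 + (j + 1) - 0 - 1 = m + j + 1 by ring, show m + 1 + (j + 1) - 1 = m + j + 1 by ring]
  module

lemma act_pow_Lminus1 (a : V.carrier) (n : ℕ) (m : ℤ) (w : M.carrier) :
    M.act ((V.Y V.omega 0 ^ n) a) m w =
      ((-1) ^ n * (((descPochhammer ℤ n).eval m : ℤ) : ℂ)) • M.act a (m - n) w := by
  induction n generalizing m with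
  | zero => simp
  | succ n ih =>
    rw [pow_succ', Module.End.mul_apply, act_Lminus1, ih, smul_smul, descPochhammer_succ_left,
      show m - 1 - n = m - (n + 1 : ℕ) by push_cast; ring]
    simp only [Polynomial.eval_mul, Polynomial.eval_X, Polynomial.eval_comp, Polynomial.eval_sub,
      Polynomial.eval_one]
    push_cast
    ring_nf

lemma act_omegaDiv (n : ℕ) (m : ℤ) (w : M.carrier) :
    M.act (V.omegaDiv n) m w = ((-1) ^ n * ((Ring.choose m n : ℤ) : ℂ)) • M.L (m - n - 1) w := by
  have hfac : (n.factorial : ℂ) ≠ 0 := by exact_mod_cast n.factorial_ne_zero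
  rw [VOA.omegaDiv, act_smul_apply, act_pow_Lminus1, smul_smul, Polynomial.eval_eq_smeval,
    Ring.descPochhammer_eq_factorial_smul_choose, L, sub_add_cancel]
  congr 1
  rw [nsmul_eq_mul]
  push_cast
  field_simp

lemma L_L_apply_eq_zero {k : ℤ} (hk : 0 ≤ k) {u : M.carrier}
    (hu : ∀ n : ℤ, k < n → M.L n u = 0) {j : ℤ} (hj : 0 ≤ j) :
    ∀ n : ℤ, k < n → M.L n (M.L j u) = 0 := by
  intro n hn
  have h := M.L_commutator n j (by omega) u
  rwa [hu n hn, hu (n + j) (by omega), map_zero, sub_zero, smul_zero] at h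

lemma act_omegaDiv_add_one (k : ℤ) (n : ℕ) (w : M.carrier) :
    M.act (V.omegaDiv n) (k + n + 1) w = ((Ring.choose (-k - 2) n : ℤ) : ℂ) • M.L k w := by
  rw [act_omegaDiv, show k + n + 1 - n - 1 = k by ring, show -k - 2 = -(k + 2) by ring,
    Ring.choose_neg, Units.smul_def, Int.coe_negOnePow_natCast, smul_eq_mul,
    show k + 2 + n - 1 = k + n + 1 by ring]
  push_cast
  rfl

section LowestPower

variable {k : ℕ} {D : ℤ} {v : V.carrier}

lemma act_apply_act_omegaDiv_eq_zero (hk : 0 < k)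
    (hv : ∀ x : M.carrier, (∀ n : ℤ, k < n → M.L n x = 0) → ∀ s, D ≤ s → M.act v s x = 0)
    {u : M.carrier} (hu : ∀ n : ℤ, k < n → M.L n u = 0) {n i : ℕ} (hi : i ≠ k + n + 1)
    {s : ℤ} (hs : D + k + n + 1 ≤ s) :
    M.act v (s - 1 - i) (M.act (V.omegaDiv n) i u) = 0 := by
  rw [act_omegaDiv, map_smul]
  rcases lt_trichotomy i n with hin | rfl | hni
  · rw [Ring.choose_natCast, Nat.choose_eq_zero_of_lt hin]
    simp
  · rw [sub_self, zero_sub, act_apply_L_neg_one, hv u hu _ (by omega), hv u hu _ (by omega)]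
    simp
  · rcases lt_or_gt_of_ne (show (i : ℤ) - n - 1 ≠ k by omega) with hjk | hkj
    · rw [hv _ (M.L_L_apply_eq_zero (by omega) hu (by omega)) _ (by omega), smul_zero]
    · rw [hu _ hkj, map_zero, smul_zero]

lemma act_Y_omegaDiv_neg_one_apply (hk : 0 < k)
    (hv : ∀ x : M.carrier, (∀ n : ℤ, k < n → M.L n x = 0) → ∀ s, D ≤ s → M.act v s x = 0)
    {u : M.carrier} (hu : ∀ n : ℤ, k < n → M.L n u = 0) (n : ℕ) {s : ℤ}
    (hs : D + k + n + 1 ≤ s) :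
    M.act (V.Y (V.omegaDiv n) (-1) v) s u =
      ((Ring.choose (-k - 2 : ℤ) n : ℤ) : ℂ) • M.act v (s - k - n - 2) (M.L k u) := by
  rw [act_Y_neg_one_apply, finsum_eq_single _ (k + n + 1) fun i hi => ?_]
  · rw [hv u hu _ (by omega), map_zero, zero_add, Nat.cast_add, Nat.cast_add, Nat.cast_one,
      act_omegaDiv_add_one, map_smul, show s - 1 - (k + n + 1) = s - k - n - 2 by ring]
  · rw [hv u hu _ (by omega), map_zero, zero_add]
    exact M.act_apply_act_omegaDiv_eq_zero hk hv hu hi hs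

theorem act_omegaWord_eq_zero (hk : 0 < k) (ns : List ℕ) {u : M.carrier}
    (hu : ∀ n : ℤ, k < n → M.L n u = 0) {s : ℤ} (hs : ns.length * (k + 2) + ns.sum ≤ s) :
    M.act (omegaWord V ns) s u = 0 := by
  induction ns generalizing u s with
  | nil =>
    simp only [List.length_nil, List.sum_nil, Nat.cast_zero, zero_mul, zero_add] at hs
    rw [omegaWord, act_one_apply, if_neg (by omega)]
  | cons n ns ih =>
    simp only [List.length_cons, List.sum_cons, Nat.cast_add, Nat.cast_one] at hs
    rw [VOA.omegaWord_cons, M.act_Y_omegaDiv_neg_one_apply hk (fun x hx s hs => ih hx hs) hu n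
      (by linarith), ih (M.L_L_apply_eq_zero (by omega) hu (by omega)) (by linarith), smul_zero]

theorem act_omegaWord_lowest (hk : 0 < k) (ns : List ℕ) {u : M.carrier}
    (hu : ∀ n : ℤ, k < n → M.L n u = 0) :
    M.act (omegaWord V ns) (ns.length * (k + 2) + ns.sum - 1) u =
      (ns.map fun n => ((Ring.choose (-k - 2 : ℤ) n : ℤ) : ℂ)).prod • (M.L k ^ ns.length) u := by
  induction ns generalizing u with
  | nil => simp [omegaWord, act_one_apply]
  | cons n ns ih =>
    simp only [List.length_cons, List.sum_cons, Nat.cast_add, Nat.cast_one]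
    rw [VOA.omegaWord_cons, M.act_Y_omegaDiv_neg_one_apply hk
        (fun x hx s hs => M.act_omegaWord_eq_zero hk ns hx hs) hu n (by linarith),
      show (ns.length + 1 : ℤ) * (k + 2) + (n + ns.sum) - 1 - k - n - 2 =
        ns.length * (k + 2) + ns.sum - 1 by ring,
      ih (M.L_L_apply_eq_zero (by omega) hu (by omega)), smul_smul, List.map_cons,
      List.prod_cons, pow_succ, Module.End.mul_apply]

end LowestPower

end WeakModule

theorem lowest_power_of_omegaWord_general (p q : ℕ) (A : VirasoroVOA p q) (M : WeakModule A.V)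
    (u : M.carrier) (k : ℤ) (hk : 0 < k)
    (h2 : ∀ n : ℤ, k < n → M.L n u = 0) (ns : List ℕ) :
    (∀ m : ℤ, m < -(ns.length : ℤ) * (k + 2) - (ns.sum : ℤ) →
      M.act (omegaWord A.V ns) (-m - 1) u = 0) ∧
    M.act (omegaWord A.V ns) (-(-(ns.length : ℤ) * (k + 2) - (ns.sum : ℤ)) - 1) u =
      ((ns.map fun n => ((Ring.choose (-k - 2 : ℤ) n : ℤ) : ℂ)).prod) •
        (((M.L k) ^ ns.length) u) := by
  lift k to ℕ using hk.le
  have hk' : 0 < k := by exact_mod_cast hk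
  refine ⟨fun m hm => M.act_omegaWord_eq_zero hk' ns h2 (by linarith), ?_⟩
  rw [show -(-(ns.length : ℤ) * (k + 2) - ns.sum) - 1 = ns.length * (k + 2) + ns.sum - 1 by ring]
  exact M.act_omegaWord_lowest hk' ns h2

/-- Let `M` be a weak `L(c_{p,q},0)`-module, `u ∈ M` and `k` a positive integer with
`L(k)u ≠ 0` and `L(n)u = 0` for all `n > k`.  Then for any nonnegative integers
`n₁, …, n_r`, the lowest power of `z` in `Y_M(ω^{(n₁)}_{-1} ⋯ ω^{(n_r)}_{-1} 𝟏, z) u` is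
`-r(k+2) - n₁ - ⋯ - n_r`, with coefficient `(∏ᵢ C(-k-2, nᵢ)) L(k)^r u`.  (The
coefficient of `z^m` in `Y_M(v,z) = ∑ vₙ z^{-n-1}` is `v_{-m-1}`.) -/
theorem lowest_power_of_omegaWord (p q : ℕ) (hp : 2 ≤ p) (hq : 2 ≤ q)
    (hpq : Nat.Coprime p q) (A : VirasoroVOA p q) (M : WeakModule A.V)
    (u : M.carrier) (k : ℤ) (hk : 0 < k) (h1 : M.L k u ≠ 0)
    (h2 : ∀ n : ℤ, k < n → M.L n u = 0) (ns : List ℕ) :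
    (∀ m : ℤ, m < -(ns.length : ℤ) * (k + 2) - (ns.sum : ℤ) →
      M.act (omegaWord A.V ns) (-m - 1) u = 0) ∧
    M.act (omegaWord A.V ns) (-(-(ns.length : ℤ) * (k + 2) - (ns.sum : ℤ)) - 1) u =
      ((ns.map fun n => ((Ring.choose (-k - 2 : ℤ) n : ℤ) : ℂ)).prod) •
        (((M.L k) ^ ns.length) u) :=
  lowest_power_of_omegaWord_general p q A M u k hk h2 ns
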